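/- arXiv:1910.07390 — 5 statements merged into one kernel-verified Lean document; each statement's English description precedes it below -/
import Mathlib

section
/- Let V be a complex Hilbert space, B a bounded, modulus-coercive sesquilinear form on V, π : V → V a continuous linear projection with range V_H and kernel W, and F a continuous antilinear functional on V. Let u ∈ V be the unique solution of B(u, v) = F(v) for all v ∈ V, let G be the Green's corrector, and let L(π u) denote the continuous antilinear functional v ↦ B(π u, v). Then u = π u − G(L(π u)) + G(F); equivalently, u − π u = G(F) − G(L(π u)). -/
/-- **Decomposition of the exact solution.** Let `π` be a continuous linear
projection on a complex Hilbert space `V`, with kernel `W = ker π`, let `B` be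
a bounded modulus-coercive sesquilinear form, and let `u` solve
`B u v = F v` for all `v`. If `gF ∈ W` is the Green's corrector of `F`
(i.e. `B gF w = F w` for all `w ∈ W`) and `gL ∈ W` is the Green's corrector of
the antilinear functional `v ↦ B (π u) v`, then
`u = π u - gL + gF`, equivalently `u - π u = gF - gL`. -/
theorem decomposition_exact_solution
    {V : Type*} [NormedAddCommGroup V] [InnerProductSpace ℂ V] [CompleteSpace V]
    (B : V → V → ℂ) (C_B α : ℝ) (hC_B : 0 < C_B) (hα : 0 < α)
    (hadd₁ : ∀ u v w : V, B (u + v) w = B u w + B v w)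
    (hsmul₁ : ∀ (c : ℂ) (u w : V), B (c • u) w = c * B u w)
    (hadd₂ : ∀ u v w : V, B u (v + w) = B u v + B u w)
    (hsmul₂ : ∀ (c : ℂ) (u w : V), B u (c • w) = (starRingEnd ℂ) c * B u w)
    (hbound : ∀ u v : V, ‖B u v‖ ≤ C_B * ‖u‖ * ‖v‖)
    (hcoer : ∀ v : V, α * ‖v‖ ^ 2 ≤ ‖B v v‖)
    (π : V →L[ℂ] V) (hπ : ∀ v : V, π (π v) = π v)
    (F : V →L⋆[ℂ] ℂ)
    (u : V) (hu : ∀ v : V, B u v = F v)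
    (gF : V) (hgF₀ : π gF = 0) (hgF : ∀ w : V, π w = 0 → B gF w = F w)
    (gL : V) (hgL₀ : π gL = 0) (hgL : ∀ w : V, π w = 0 → B gL w = B (π u) w) :
    u = π u - gL + gF ∧ u - π u = gF - gL := by

  have hsub₁ : ∀ x y w : V, B (x - y) w = B x w - B y w := by
    intro x y w
    have := hadd₁ x (-y) w
    have hneg : B (-y) w = -B y w := by
      have := hsmul₁ (-1) y w
      simpa using this
    simpa [sub_eq_add_neg, hneg] using this
  set d : V := u - π u - (gF - gL) with hd
  have hπd : π d = 0 := by
    simp [hd, map_sub, hπ u, hgF₀, hgL₀]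
  have hBd : ∀ w : V, π w = 0 → B d w = 0 := by
    intro w hw
    have h1 : B u w = F w := hu w
    have h2 : B gF w = F w := hgF w hw
    have h3 : B gL w = B (π u) w := hgL w hw
    simp [hd, hsub₁, h1, h2, h3]
  have hdd : B d d = 0 := hBd d hπd
  have hd0 : d = 0 := by
    have := hcoer d
    rw [hdd] at this
    simp at this
    have : ‖d‖ ^ 2 ≤ 0 := nonpos_of_mul_nonpos_right (by simpa [mul_comm] using this) hα
    have h2 : ‖d‖ = 0 := by nlinarith [norm_nonneg d, sq_nonneg ‖d‖]
    exact norm_eq_zero.mp h2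
  have key : u - π u = gF - gL := sub_eq_zero.mp hd0
  refine ⟨?_, key⟩
  have h := sub_eq_iff_eq_add.mp key
  conv_lhs => rw [h]
  abel
end

section
/- Let V be a complex Hilbert space, B a bounded, modulus-coercive sesquilinear form on V, π : V → V a continuous linear projection with range V_H and kernel W, K : V_H → W the ideal corrector, and F a continuous antilinear functional on V. Then there exists a unique u_H⁰ ∈ V_H satisfying the ideal numerically homogenized equation B((I + K)(u_H⁰), (I + K)(v)) = F((I + K)(v)) for all v ∈ V_H. -/
/-!
Testing the corrector equation with a difference of two solutions shows, by coercivity of `B` on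
`W`, that it has at most one solution; hence `K` is linear on `V_H`, and testing it with `K v`
gives `α ‖K v‖² ≤ ‖B‖ ‖v‖ ‖K v‖`, so `K` is bounded. The form `(u, v) ↦ B ((I + K) u) ((I + K) v)`
is therefore bounded on the closed subspace `V_H`, and it is coercive there because
`π ∘ (I + K) = I` on `V_H`. Well-posedness is then Lax–Milgram for a modulus-coercive sesquilinear
form `b`: the operator `T` with `⟪v, T u⟫ = b(u, v)` is bounded below, so it has closed range, and
the orthogonal complement of that range is trivial since `⟪w, T w⟫ = 0` forces `w = 0`.
-/

open InnerProductSpace ContinuousLinearMap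

theorem eq_zero_of_mul_norm_sq_le_zero {G : Type*} [NormedAddCommGroup G] {α : ℝ} (hα : 0 < α)
    {w : G} (h : α * ‖w‖ ^ 2 ≤ 0) : w = 0 :=
  norm_eq_zero.mp <| pow_eq_zero_iff two_ne_zero |>.mp <|
    le_antisymm (nonpos_of_mul_nonpos_right h hα) (sq_nonneg _)

section LaxMilgram

variable {𝕜 E : Type*} [RCLike 𝕜] [NormedAddCommGroup E] [InnerProductSpace 𝕜 E]

theorem ContinuousLinearMap.mul_norm_le_norm_apply_of_coercive (T : E →L[𝕜] E) {α : ℝ}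
    (hT : ∀ u, α * ‖u‖ ^ 2 ≤ ‖⟪u, T u⟫_𝕜‖) (u : E) : α * ‖u‖ ≤ ‖T u‖ := by
  rcases (norm_nonneg u).eq_or_lt with hu | hu
  · simp [← hu]
  · refine le_of_mul_le_mul_right ?_ hu
    calc α * ‖u‖ * ‖u‖ = α * ‖u‖ ^ 2 := by ring
      _ ≤ ‖⟪u, T u⟫_𝕜‖ := hT u
      _ ≤ ‖u‖ * ‖T u‖ := norm_inner_le_norm u (T u)
      _ = ‖T u‖ * ‖u‖ := mul_comm _ _

variable [CompleteSpace E]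

theorem ContinuousLinearMap.bijective_of_coercive (T : E →L[𝕜] E) {α : ℝ} (hα : 0 < α)
    (hT : ∀ u, α * ‖u‖ ^ 2 ≤ ‖⟪u, T u⟫_𝕜‖) : Function.Bijective T := by
  have hanti : AntilipschitzWith (Real.toNNReal α⁻¹) T := by
    refine T.antilipschitz_of_bound fun u => ?_
    rw [Real.coe_toNNReal _ (inv_nonneg.mpr hα.le), inv_mul_eq_div, le_div_iff₀' hα]
    exact T.mul_norm_le_norm_apply_of_coercive hT u
  have hclosed : IsClosed (T.range : Set E) := by
    rw [LinearMap.coe_range, coe_coe]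
    exact hanti.isClosed_range T.uniformContinuous
  have := hclosed.completeSpace_coe
  refine ⟨hanti.injective, LinearMap.range_eq_top.mp ?_⟩
  refine Submodule.orthogonal_eq_bot_iff.mp (Submodule.eq_bot_iff _ |>.mpr fun w hw => ?_)
  have hzero : ⟪w, T w⟫_𝕜 = 0 :=
    Submodule.inner_left_of_mem_orthogonal (LinearMap.mem_range_self _ w) hw
  exact eq_zero_of_mul_norm_sq_le_zero hα (by simpa only [hzero, norm_zero] using hT w)

theorem ContinuousLinearMap.existsUnique_apply_eq_of_coercive (b : E →L[𝕜] E →L⋆[𝕜] 𝕜)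
    {α : ℝ} (hα : 0 < α) (hb : ∀ u, α * ‖u‖ ^ 2 ≤ ‖b u u‖) (f : E →L⋆[𝕜] 𝕜) :
    ∃! u, ∀ v, b u v = f v := by
  set T := adjoint (continuousLinearMapOfBilin b.flip)
  have hT : ∀ u v, ⟪v, T u⟫_𝕜 = b u v := fun u v => by
    rw [adjoint_inner_right, continuousLinearMapOfBilin_apply, flip_apply]
  set g := (toDual 𝕜 E).symm (((starL 𝕜 : 𝕜 ≃L⋆[𝕜] 𝕜) : 𝕜 →L⋆[𝕜] 𝕜).comp f)
  have hg : ∀ v, ⟪v, g⟫_𝕜 = f v := fun v => by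
    rw [← inner_conj_symm, toDual_symm_apply]
    simp
  have hsolve : ∀ u, (∀ v, b u v = f v) ↔ T u = g := fun u => by
    simp only [← hT, ← hg]
    exact ⟨ext_inner_left 𝕜, fun h v => h ▸ rfl⟩
  have hT_coercive : ∀ u, α * ‖u‖ ^ 2 ≤ ‖⟪u, T u⟫_𝕜‖ := by simpa only [hT] using hb
  simpa only [hsolve] using (T.bijective_of_coercive hα hT_coercive).existsUnique g

end LaxMilgram

section IdealCorrector

variable {𝕜 E : Type*} [RCLike 𝕜] [NormedAddCommGroup E] [NormedSpace 𝕜 E]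
  {b : E →L[𝕜] E →L⋆[𝕜] 𝕜} {α : ℝ} {π : E →L[𝕜] E} {K : E → E}

def IsIdealCorrector (b : E →L[𝕜] E →L⋆[𝕜] 𝕜) (π : E →L[𝕜] E) (K : E → E) : Prop :=
  ∀ v ∈ Set.range π, π (K v) = 0 ∧ ∀ w, π w = 0 → b (K v) w = -b v w

namespace IsIdealCorrector

theorem apply_eq_of_forall (hK : IsIdealCorrector b π K) (hα : 0 < α)
    (hb : ∀ u, α * ‖u‖ ^ 2 ≤ ‖b u u‖) {v w : E} (hv : v ∈ Set.range π) (hw : π w = 0)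
    (hbw : ∀ w', π w' = 0 → b w w' = -b v w') : K v = w := by
  obtain ⟨hKv₀, hKv⟩ := hK v hv
  have hd : π (K v - w) = 0 := by rw [map_sub, hKv₀, hw, sub_zero]
  have hbd : b (K v - w) (K v - w) = 0 := by
    rw [map_sub b, sub_apply, hKv _ hd, hbw _ hd, sub_self]
  refine sub_eq_zero.mp (eq_zero_of_mul_norm_sq_le_zero hα ?_)
  simpa only [hbd, norm_zero] using hb (K v - w)

theorem map_proj_add (hK : IsIdealCorrector b π K) (hα : 0 < α)
    (hb : ∀ u, α * ‖u‖ ^ 2 ≤ ‖b u u‖) (x y : E) : K (π (x + y)) = K (π x) + K (π y) := by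
  obtain ⟨hx₀, hx⟩ := hK _ ⟨x, rfl⟩
  obtain ⟨hy₀, hy⟩ := hK _ ⟨y, rfl⟩
  refine hK.apply_eq_of_forall hα hb ⟨x + y, rfl⟩ ?_ fun w hw => ?_
  · rw [map_add, hx₀, hy₀, add_zero]
  · rw [map_add b, add_apply, hx w hw, hy w hw, map_add π, map_add b, add_apply, neg_add]

theorem map_proj_smul (hK : IsIdealCorrector b π K) (hα : 0 < α)
    (hb : ∀ u, α * ‖u‖ ^ 2 ≤ ‖b u u‖) (c : 𝕜) (x : E) : K (π (c • x)) = c • K (π x) := by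
  obtain ⟨hx₀, hx⟩ := hK _ ⟨x, rfl⟩
  refine hK.apply_eq_of_forall hα hb ⟨c • x, rfl⟩ ?_ fun w hw => ?_
  · rw [map_smul, hx₀, smul_zero]
  · rw [map_smul b, smul_apply, hx w hw, map_smul π, map_smul b, smul_apply, smul_neg]

theorem norm_apply_le (hK : IsIdealCorrector b π K) (hα : 0 < α)
    (hb : ∀ u, α * ‖u‖ ^ 2 ≤ ‖b u u‖) {v : E} (hv : v ∈ Set.range π) :
    ‖K v‖ ≤ ‖b‖ / α * ‖v‖ := by
  obtain ⟨hKv₀, hKv⟩ := hK v hv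
  rcases (norm_nonneg (K v)).eq_or_lt with h0 | h0
  · rw [← h0]; positivity
  rw [div_mul_eq_mul_div, le_div_iff₀' hα]
  refine le_of_mul_le_mul_right ?_ h0
  calc α * ‖K v‖ * ‖K v‖ = α * ‖K v‖ ^ 2 := by ring
    _ ≤ ‖b (K v) (K v)‖ := hb (K v)
    _ = ‖b v (K v)‖ := by rw [hKv _ hKv₀, norm_neg]
    _ ≤ ‖b‖ * ‖v‖ * ‖K v‖ := b.le_opNorm₂ v (K v)

theorem exists_continuousLinearMap_eq_comp_proj (hK : IsIdealCorrector b π K) (hα : 0 < α)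
    (hb : ∀ u, α * ‖u‖ ^ 2 ≤ ‖b u u‖) : ∃ κ : E →L[𝕜] E, ∀ x, κ x = K (π x) := by
  let κ : E →ₗ[𝕜] E :=
    { toFun := fun x => K (π x)
      map_add' := hK.map_proj_add hα hb
      map_smul' := hK.map_proj_smul hα hb }
  refine ⟨κ.mkContinuous (‖b‖ / α * ‖π‖) fun x => ?_, fun _ => rfl⟩
  rw [mul_assoc]
  exact (hK.norm_apply_le hα hb ⟨x, rfl⟩).trans
    (mul_le_mul_of_nonneg_left (π.le_opNorm x) (by positivity))

end IsIdealCorrector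

end IdealCorrector

theorem ContinuousLinearMap.coercive_bilinearComp {𝕜 E F : Type*} [RCLike 𝕜]
    [NormedAddCommGroup E] [NormedSpace 𝕜 E] [NormedAddCommGroup F] [NormedSpace 𝕜 F]
    {b : E →L[𝕜] E →L⋆[𝕜] 𝕜} {α C : ℝ} (hα : 0 ≤ α) (hC : 0 < C)
    (hb : ∀ u, α * ‖u‖ ^ 2 ≤ ‖b u u‖) {g : F →L[𝕜] E} (hg : ∀ y, ‖y‖ ≤ C * ‖g y‖) (y : F) :
    α / C ^ 2 * ‖y‖ ^ 2 ≤ ‖b.bilinearComp g g y y‖ :=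
  calc α / C ^ 2 * ‖y‖ ^ 2 ≤ α / C ^ 2 * (C * ‖g y‖) ^ 2 := by gcongr; exact hg y
    _ = α * ‖g y‖ ^ 2 := by field_simp
    _ ≤ ‖b.bilinearComp g g y y‖ := hb (g y)

theorem ideal_homogenized_equation_wellposed_general
    {V : Type*} [NormedAddCommGroup V] [InnerProductSpace ℂ V] [CompleteSpace V]
    (B : V → V → ℂ) (C_B α : ℝ) (hα : 0 < α)
    (hadd₁ : ∀ u v w : V, B (u + v) w = B u w + B v w)
    (hsmul₁ : ∀ (c : ℂ) (u w : V), B (c • u) w = c * B u w)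
    (hadd₂ : ∀ u v w : V, B u (v + w) = B u v + B u w)
    (hsmul₂ : ∀ (c : ℂ) (u w : V), B u (c • w) = (starRingEnd ℂ) c * B u w)
    (hbound : ∀ u v : V, ‖B u v‖ ≤ C_B * ‖u‖ * ‖v‖)
    (hcoer : ∀ v : V, α * ‖v‖ ^ 2 ≤ ‖B v v‖)
    (π : V →L[ℂ] V) (hπ : ∀ v : V, π (π v) = π v)
    (K : V → V)
    (hK₀ : ∀ vH ∈ Set.range π, π (K vH) = 0)
    (hK : ∀ vH ∈ Set.range π, ∀ w : V, π w = 0 → B (K vH) w = -(B vH w))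
    (F : V →L⋆[ℂ] ℂ) :
    ∃! uH0 : V, uH0 ∈ Set.range π ∧
      ∀ v ∈ Set.range π, B (uH0 + K uH0) (v + K v) = F (v + K v) := by
  let b : V →L[ℂ] V →L⋆[ℂ] ℂ :=
    (LinearMap.mk₂'ₛₗ _ _ B hadd₁ hsmul₁ hadd₂ hsmul₂).mkContinuous₂ C_B hbound
  have hKb : IsIdealCorrector b π K := fun v hv => ⟨hK₀ v hv, hK v hv⟩
  obtain ⟨κ, hκ⟩ := hKb.exists_continuousLinearMap_eq_comp_proj hα hcoer
  let VH := π.range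
  have : CompleteSpace VH :=
    (show IsIdempotentElem π from ContinuousLinearMap.ext hπ).isClosed_range.completeSpace_coe
  have hπ_VH : ∀ v : VH, π v = v := fun ⟨_, x, hx⟩ => hx ▸ hπ x
  let G : VH →L[ℂ] V := (π + κ).comp VH.subtypeL
  have hG : ∀ v : VH, G v = v + K v := fun v => by
    simp only [G, comp_apply, add_apply, hκ, Submodule.subtypeL_apply, hπ_VH]
  have hG_bound : ∀ v : VH, ‖v‖ ≤ (‖π‖ + 1) * ‖G v‖ := fun v =>
    calc ‖v‖ = ‖π (G v)‖ := by rw [hG, map_add, hπ_VH, hK₀ _ v.2, add_zero]; rfl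
      _ ≤ ‖π‖ * ‖G v‖ := π.le_opNorm _
      _ ≤ (‖π‖ + 1) * ‖G v‖ := by gcongr; linarith
  have hform : ∀ u v : VH, b.bilinearComp G G u v = B (u + K u) (v + K v) := fun u v => by
    rw [bilinearComp_apply, hG, hG]; rfl
  have hrhs : ∀ v : VH, F.comp G v = F (v + K v) := fun v => by rw [comp_apply, hG]
  obtain ⟨u, hu, huniq⟩ := existsUnique_apply_eq_of_coercive (b.bilinearComp G G)
    (div_pos hα (by positivity)) (coercive_bilinearComp hα.le (by positivity) hcoer hG_bound)
    (F.comp G)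
  refine ⟨u, ⟨u.2, fun v hv => ?_⟩, fun x ⟨hx, hxeq⟩ => ?_⟩
  · simpa only [hform, hrhs] using hu ⟨v, hv⟩
  · refine congrArg Subtype.val (huniq ⟨x, hx⟩ fun v => ?_)
    simpa only [hform, hrhs] using hxeq v v.2

/-- **Well-posedness of the ideal numerically homogenized equation.** Let `π`
be a continuous linear projection on a complex Hilbert space `V` with range
`V_H` and kernel `W`, let `B` be a bounded modulus-coercive sesquilinear form,
`K` the ideal corrector and `F` a continuous antilinear functional. Then there
exists a unique `u_H⁰ ∈ V_H` with
`B ((I + K) u_H⁰) ((I + K) v) = F ((I + K) v)` for all `v ∈ V_H`. -/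
theorem ideal_homogenized_equation_wellposed
    {V : Type*} [NormedAddCommGroup V] [InnerProductSpace ℂ V] [CompleteSpace V]
    (B : V → V → ℂ) (C_B α : ℝ) (hC_B : 0 < C_B) (hα : 0 < α)
    (hadd₁ : ∀ u v w : V, B (u + v) w = B u w + B v w)
    (hsmul₁ : ∀ (c : ℂ) (u w : V), B (c • u) w = c * B u w)
    (hadd₂ : ∀ u v w : V, B u (v + w) = B u v + B u w)
    (hsmul₂ : ∀ (c : ℂ) (u w : V), B u (c • w) = (starRingEnd ℂ) c * B u w)
    (hbound : ∀ u v : V, ‖B u v‖ ≤ C_B * ‖u‖ * ‖v‖)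
    (hcoer : ∀ v : V, α * ‖v‖ ^ 2 ≤ ‖B v v‖)
    (π : V →L[ℂ] V) (hπ : ∀ v : V, π (π v) = π v)
    (K : V → V)
    (hK₀ : ∀ vH ∈ Set.range π, π (K vH) = 0)
    (hK : ∀ vH ∈ Set.range π, ∀ w : V, π w = 0 → B (K vH) w = -(B vH w))
    (F : V →L⋆[ℂ] ℂ) :
    ∃! uH0 : V, uH0 ∈ Set.range π ∧
      ∀ v ∈ Set.range π, B (uH0 + K uH0) (v + K v) = F (v + K v) :=
  ideal_homogenized_equation_wellposed_general B C_B α hα hadd₁ hsmul₁ hadd₂ hsmul₂ hbound hcoer π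
    hπ K hK₀ hK F
end

section
/- Let V be a complex Hilbert space, B a bounded, modulus-coercive sesquilinear form on V with bound C_B and coercivity constant α, π : V → V a continuous linear projection with range V_H and kernel W, K : V_H → W the ideal corrector, and F a continuous antilinear functional on V. Let u ∈ V solve B(u, v) = F(v) for all v ∈ V, let G(F) ∈ W be the Green's corrector, and let u_H⁰ ∈ V_H be the unique solution of B((I + K)(u_H⁰), (I + K)(v)) = F((I + K)(v)) for all v ∈ V_H. Then ‖u − (I + K)(u_H⁰)‖ ≤ (C_B/α) ‖G(F)‖. -/
/-- **Quasi-optimality of the ideal multiscale method.** Let `π` be a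
continuous linear projection on a complex Hilbert space `V`, `B` a bounded
modulus-coercive sesquilinear form, `K` the ideal corrector, `F` a continuous
antilinear functional, `u` the solution of `B u v = F v` for all `v`, `gF ∈ W`
the Green's corrector of `F`, and `u_H⁰ ∈ V_H` the solution of the ideal
numerically homogenized equation. Then
`‖u - (I + K) u_H⁰‖ ≤ (C_B / α) ‖gF‖`. -/
theorem ideal_method_error_estimate
    {V : Type*} [NormedAddCommGroup V] [InnerProductSpace ℂ V] [CompleteSpace V]
    (B : V → V → ℂ) (C_B α : ℝ) (hC_B : 0 < C_B) (hα : 0 < α)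
    (hadd₁ : ∀ u v w : V, B (u + v) w = B u w + B v w)
    (hsmul₁ : ∀ (c : ℂ) (u w : V), B (c • u) w = c * B u w)
    (hadd₂ : ∀ u v w : V, B u (v + w) = B u v + B u w)
    (hsmul₂ : ∀ (c : ℂ) (u w : V), B u (c • w) = (starRingEnd ℂ) c * B u w)
    (hbound : ∀ u v : V, ‖B u v‖ ≤ C_B * ‖u‖ * ‖v‖)
    (hcoer : ∀ v : V, α * ‖v‖ ^ 2 ≤ ‖B v v‖)
    (π : V →L[ℂ] V) (hπ : ∀ v : V, π (π v) = π v)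
    (K : V → V)
    (hK₀ : ∀ vH ∈ Set.range π, π (K vH) = 0)
    (hK : ∀ vH ∈ Set.range π, ∀ w : V, π w = 0 → B (K vH) w = -(B vH w))
    (F : V →L⋆[ℂ] ℂ)
    (u : V) (hu : ∀ v : V, B u v = F v)
    (gF : V) (hgF₀ : π gF = 0) (hgF : ∀ w : V, π w = 0 → B gF w = F w)
    (uH0 : V) (huH0 : uH0 ∈ Set.range π)
    (huH0eq : ∀ v ∈ Set.range π, B (uH0 + K uH0) (v + K v) = F (v + K v)) :
    ‖u - (uH0 + K uH0)‖ ≤ (C_B / α) * ‖gF‖ := by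
  have hsub₁ : ∀ a b w : V, B (a - b) w = B a w - B b w := by
    intro a b w
    rw [sub_eq_add_neg, hadd₁, ← neg_one_smul ℂ b, hsmul₁]; ring
  have hsub₂ : ∀ a b w : V, B w (a - b) = B w a - B w b := by
    intro a b w
    rw [sub_eq_add_neg, hadd₂, ← neg_one_smul ℂ b, hsmul₂]
    simp; ring
  -- vanish by coercivity
  have hzero : ∀ z : V, B z z = 0 → z = 0 := by
    intro z hz
    have := hcoer z
    rw [hz, norm_zero] at this
    have hx : ‖z‖ ^ 2 ≤ 0 := le_of_mul_le_mul_left (by simpa using this) hα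
    have hn : ‖z‖ ^ 2 = 0 := le_antisymm hx (sq_nonneg _)
    exact norm_eq_zero.mp (pow_eq_zero_iff two_ne_zero |>.mp hn)
  -- orthogonality: B e ((I+K) v) = 0 for v in range π
  set e := u - (uH0 + K uH0) with he
  have horth : ∀ v ∈ Set.range π, B e (v + K v) = 0 := by
    intro v hv
    rw [hsub₁, hu, huH0eq v hv, sub_self]
  -- u - gF = (I+K)(π u)
  have hπu : π u ∈ Set.range π := ⟨u, rfl⟩
  have hdecomp : u - gF = π u + K (π u) := by
    have hz : π (u - π u - K (π u) - gF) = 0 := by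
      simp [hπ u, hK₀ _ hπu, hgF₀]
    set z := u - π u - K (π u) - gF with hzdef
    have hBz : ∀ w : V, π w = 0 → B z w = 0 := by
      intro w hw
      rw [hzdef, hsub₁, hsub₁, hsub₁, hu, hK _ hπu w hw, hgF w hw]
      ring
    have hz0 : z = 0 := hzero z (hBz z hz)
    rw [← sub_eq_zero, show u - gF - (π u + K (π u)) = z by rw [hzdef]; abel]
    exact hz0
  -- B e e = B e gF
  have hBee : B e e = B e gF := by
    have h1 : e - gF = (π u + K (π u)) - (uH0 + K uH0) := by
      rw [he, hdecomp.symm]; abel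
    have h2 : B e (e - gF) = 0 := by
      rw [h1, hsub₂, horth _ hπu, horth _ huH0, sub_self]
    have h3 := hsub₂ e gF e
    rw [h2] at h3
    exact sub_eq_zero.mp h3.symm
  -- conclude
  have hkey : α * ‖e‖ ^ 2 ≤ C_B * ‖e‖ * ‖gF‖ := by
    calc α * ‖e‖ ^ 2 ≤ ‖B e e‖ := hcoer e
      _ = ‖B e gF‖ := by rw [hBee]
      _ ≤ C_B * ‖e‖ * ‖gF‖ := hbound e gF
  rcases eq_or_lt_of_le (norm_nonneg e) with h0 | h0
  · rw [← h0]
    positivity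
  · rw [div_mul_eq_mul_div, le_div_iff₀ hα]
    nlinarith
end

section
/- Let V be a complex Hilbert space, B a bounded, modulus-coercive sesquilinear form on V that is additionally Hermitian, i.e. B(v, w) = conj(B(w, v)) for all v, w ∈ V. Let π : V → V be a continuous linear projection with range V_H and kernel W, K : V_H → W the ideal corrector, F a continuous antilinear functional on V, u ∈ V the unique solution of B(u, v) = F(v) for all v ∈ V, G(F) ∈ W the Green's corrector, and u_H⁰ ∈ V_H the unique solution of B((I + K)(u_H⁰), (I + K)(v)) = F((I + K)(v)) for all v ∈ V_H. Then u_H⁰ = π u, and consequently the error has the exact characterization u − (I + K)(u_H⁰) = G(F). -/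
/-- **Exact error characterization for Hermitian forms.** If in addition the
bounded, modulus-coercive sesquilinear form `B` is Hermitian, i.e.
`B v w = conj (B w v)`, then the solution `u_H⁰` of the ideal numerically
homogenized equation satisfies `u_H⁰ = π u`, and consequently
`u - (I + K) u_H⁰ = gF`, where `gF` is the Green's corrector of `F`. -/
theorem ideal_method_exact_error_hermitian
    {V : Type*} [NormedAddCommGroup V] [InnerProductSpace ℂ V] [CompleteSpace V]
    (B : V → V → ℂ) (C_B α : ℝ) (hC_B : 0 < C_B) (hα : 0 < α)
    (hadd₁ : ∀ u v w : V, B (u + v) w = B u w + B v w)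
    (hsmul₁ : ∀ (c : ℂ) (u w : V), B (c • u) w = c * B u w)
    (hadd₂ : ∀ u v w : V, B u (v + w) = B u v + B u w)
    (hsmul₂ : ∀ (c : ℂ) (u w : V), B u (c • w) = (starRingEnd ℂ) c * B u w)
    (hbound : ∀ u v : V, ‖B u v‖ ≤ C_B * ‖u‖ * ‖v‖)
    (hcoer : ∀ v : V, α * ‖v‖ ^ 2 ≤ ‖B v v‖)
    (hherm : ∀ v w : V, B v w = (starRingEnd ℂ) (B w v))
    (π : V →L[ℂ] V) (hπ : ∀ v : V, π (π v) = π v)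
    (K : V → V)
    (hK₀ : ∀ vH ∈ Set.range π, π (K vH) = 0)
    (hK : ∀ vH ∈ Set.range π, ∀ w : V, π w = 0 → B (K vH) w = -(B vH w))
    (F : V →L⋆[ℂ] ℂ)
    (u : V) (hu : ∀ v : V, B u v = F v)
    (gF : V) (hgF₀ : π gF = 0) (hgF : ∀ w : V, π w = 0 → B gF w = F w)
    (uH0 : V) (huH0 : uH0 ∈ Set.range π)
    (huH0eq : ∀ v ∈ Set.range π, B (uH0 + K uH0) (v + K v) = F (v + K v)) :
    uH0 = π u ∧ u - (uH0 + K uH0) = gF := by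
  -- zero diagonal implies zero vector
  have hzero : ∀ x : V, B x x = 0 → x = 0 := by
    intro x hx
    have h := hcoer x
    rw [hx, norm_zero] at h
    have h1 : ‖x‖ ^ 2 ≤ 0 := by nlinarith
    have h2 : ‖x‖ ^ 2 = 0 := le_antisymm h1 (sq_nonneg _)
    exact norm_eq_zero.mp (pow_eq_zero_iff (by norm_num : (2:ℕ) ≠ 0) |>.mp h2)
  have hneg₁ : ∀ a w : V, B (-a) w = -B a w := by
    intro a w
    have := hsmul₁ (-1) a w
    simpa using this
  have hsub₁ : ∀ a b w : V, B (a - b) w = B a w - B b w := by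
    intro a b w
    rw [sub_eq_add_neg, hadd₁, hneg₁, sub_eq_add_neg]
  obtain ⟨x, hx⟩ := huH0
  have huH0' : uH0 ∈ Set.range π := ⟨x, hx⟩
  have hd : π u - uH0 ∈ Set.range π := ⟨u - x, by rw [map_sub, hx]⟩
  set d : V := π u - uH0 with hd_def
  have hπd : π d = d := by
    obtain ⟨y, hy⟩ := hd
    rw [← hy, hπ]
  -- the combination d + K d vanishes against W in the first slot
  have hBzw : ∀ w : V, π w = 0 → B (d + K d) w = 0 := by
    intro w hw
    rw [hadd₁, hK d hd w hw, add_neg_cancel]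
  have hπz : π (d + K d) = d := by rw [map_add, hπd, hK₀ d hd, add_zero]
  have hπuH0 : π uH0 = uH0 := by rw [← hx, hπ]
  have hBew : ∀ w : V, π w = 0 → B (u - (uH0 + K uH0)) w = F w := by
    intro w hw
    rw [hsub₁, hadd₁, hK uH0 huH0' w hw, add_neg_cancel, sub_zero, hu]
  have hπe : π (u - (uH0 + K uH0)) = d := by
    rw [map_sub, map_add, hπuH0, hK₀ uH0 huH0', add_zero, hd_def]
  -- the residual r := e - gF - (d + K d) lies in W and is B-orthogonal to W
  have hπr : π (u - (uH0 + K uH0) - gF - (d + K d)) = 0 := by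
    rw [map_sub, map_sub, hπe, hgF₀, hπz]
    abel
  have hBrw : ∀ w : V, π w = 0 →
      B (u - (uH0 + K uH0) - gF - (d + K d)) w = 0 := by
    intro w hw
    rw [hsub₁, hsub₁, hBew w hw, hgF w hw, hBzw w hw]
    ring
  have hr0 : u - (uH0 + K uH0) - gF - (d + K d) = 0 :=
    hzero _ (hBrw _ hπr)
  have hez : u - (uH0 + K uH0) - gF = d + K d := sub_eq_zero.mp hr0
  -- diagonal value of d + K d vanishes
  have hBez : B (u - (uH0 + K uH0)) (d + K d) = 0 := by
    rw [hsub₁, hu, huH0eq d hd, sub_self]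
  have hBgz : B gF (d + K d) = 0 := by
    have h1 : B (d + K d) gF = 0 := hBzw gF hgF₀
    rw [hherm, h1, map_zero]
  have hBzz : B (d + K d) (d + K d) = 0 := by
    have h := hsub₁ (u - (uH0 + K uH0)) gF (d + K d)
    rw [hBez, hBgz, sub_zero, hez] at h
    simpa using h
  have hzk : d + K d = 0 := hzero _ hBzz
  have hd0 : d = 0 := by rw [← hπz, hzk, map_zero]
  have h1 : uH0 = π u := by
    have := hd_def
    rw [hd0] at this
    exact (sub_eq_zero.mp this.symm).symm
  refine ⟨h1, ?_⟩
  have h2 := hez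
  rw [hzk] at h2
  exact sub_eq_zero.mp h2
end

section
/- Let V be a complex Hilbert space, B a bounded, modulus-coercive sesquilinear form on V, π : V → V a continuous linear projection with range V_H and kernel W, K : V_H → W the ideal corrector, and F a continuous antilinear functional on V. Let u ∈ V solve B(u, v) = F(v) for all v ∈ V and let G(F) ∈ W be the Green's corrector. Then there exists a unique u_H^corr ∈ V_H solving the source-corrected homogenized equation B((I + K)(u_H^corr), (I + K)(v)) = F((I + K)(v)) − B(G(F), (I + K)(v)) for all v ∈ V_H; moreover u_H^corr = π u, and the source-corrected approximation is exact: (I + K)(u_H^corr) + G(F) = u. -/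
/-- **Exactness of the ideal source-corrected method.** Let `K` be the ideal
corrector and `gF ∈ W` the Green's corrector of `F`. Then the source-corrected
homogenized equation
`B ((I + K) u) ((I + K) v) = F ((I + K) v) - B gF ((I + K) v)` for all
`v ∈ V_H` has a unique solution `u_H^corr ∈ V_H`; moreover `u_H^corr = π u`
and the corrected approximation is exact: `(I + K) u_H^corr + gF = u`. -/
theorem source_corrected_ideal_method_exact
    {V : Type*} [NormedAddCommGroup V] [InnerProductSpace ℂ V] [CompleteSpace V]
    (B : V → V → ℂ) (C_B α : ℝ) (hC_B : 0 < C_B) (hα : 0 < α)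
    (hadd₁ : ∀ u v w : V, B (u + v) w = B u w + B v w)
    (hsmul₁ : ∀ (c : ℂ) (u w : V), B (c • u) w = c * B u w)
    (hadd₂ : ∀ u v w : V, B u (v + w) = B u v + B u w)
    (hsmul₂ : ∀ (c : ℂ) (u w : V), B u (c • w) = (starRingEnd ℂ) c * B u w)
    (hbound : ∀ u v : V, ‖B u v‖ ≤ C_B * ‖u‖ * ‖v‖)
    (hcoer : ∀ v : V, α * ‖v‖ ^ 2 ≤ ‖B v v‖)
    (π : V →L[ℂ] V) (hπ : ∀ v : V, π (π v) = π v)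
    (K : V → V)
    (hK₀ : ∀ vH ∈ Set.range π, π (K vH) = 0)
    (hK : ∀ vH ∈ Set.range π, ∀ w : V, π w = 0 → B (K vH) w = -(B vH w))
    (F : V →L⋆[ℂ] ℂ)
    (u : V) (hu : ∀ v : V, B u v = F v)
    (gF : V) (hgF₀ : π gF = 0) (hgF : ∀ w : V, π w = 0 → B gF w = F w) :
    (∃! uc : V, uc ∈ Set.range π ∧
        ∀ v ∈ Set.range π,
          B (uc + K uc) (v + K v) = F (v + K v) - B gF (v + K v)) ∧
      (∀ uc : V,
        (uc ∈ Set.range π ∧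
          ∀ v ∈ Set.range π,
            B (uc + K uc) (v + K v) = F (v + K v) - B gF (v + K v)) →
        uc = π u ∧ (uc + K uc) + gF = u) := by
  have hneg₁ : ∀ y w : V, B (-y) w = -(B y w) := fun y w => by
    have := hsmul₁ (-1) y w; simpa using this
  have hsub₁ : ∀ x y w : V, B (x - y) w = B x w - B y w := fun x y w => by
    rw [sub_eq_add_neg, hadd₁, hneg₁, sub_eq_add_neg]
  have hcz : ∀ v : V, B v v = 0 → v = 0 := by
    intro v h
    have hc := hcoer v
    rw [h, norm_zero] at hc
    have hv : ‖v‖ = 0 := by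
      by_contra h'
      have hp : 0 < ‖v‖ := (norm_nonneg v).lt_of_ne (Ne.symm h')
      have := mul_pos hα (pow_pos hp 2)
      linarith
    exact norm_eq_zero.mp hv
  have hπu : π u ∈ Set.range π := ⟨u, rfl⟩
  have hKπu0 : π (K (π u)) = 0 := hK₀ _ hπu
  -- exactness for the candidate π u
  have hz : u - (π u + K (π u) + gF) = 0 := by
    apply hcz
    have hW : π (u - (π u + K (π u) + gF)) = 0 := by
      simp [map_sub, map_add, hπ u, hKπu0, hgF₀]
    set w := u - (π u + K (π u) + gF) with hw_def
    have h1 : B (π u + K (π u) + gF) w = B (π u) w + B (K (π u)) w + B gF w := by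
      rw [hadd₁, hadd₁]
    rw [hsub₁, h1, hu, hK (π u) hπu w hW, hgF w hW]
    ring
  have hex : π u + K (π u) + gF = u := (eq_of_sub_eq_zero hz).symm
  have hexd : π u + K (π u) = u - gF := by rw [eq_sub_iff_add_eq]; exact hex
  have key : ∀ v ∈ Set.range π,
      B (π u + K (π u)) (v + K v) = F (v + K v) - B gF (v + K v) := by
    intro v hv
    rw [hexd, hsub₁, hu]
  have huniq : ∀ uc : V, (uc ∈ Set.range π ∧
      ∀ v ∈ Set.range π,
        B (uc + K uc) (v + K v) = F (v + K v) - B gF (v + K v)) → uc = π u := by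
    rintro uc ⟨hucm, hprop⟩
    obtain ⟨x, hx⟩ := hucm
    have hucmem : π uc = uc := by rw [← hx, hπ]
    set e := (uc + K uc) - (π u + K (π u)) with he_def
    set d := uc - π u with hd_def
    have hd : π d = d := by simp [hd_def, map_sub, hucmem, hπ]
    have hdmem : d ∈ Set.range π := ⟨d, hd⟩
    have hKuc0 : π (K uc) = 0 := hK₀ uc ⟨x, hx⟩
    have hπe : π e = d := by
      simp [he_def, hd_def, map_sub, map_add, hucmem, hπ, hKuc0, hKπu0]
    have heW : ∀ w : V, π w = 0 → B e w = 0 := by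
      intro w hw
      rw [he_def, hsub₁, hadd₁, hadd₁, hK uc ⟨x, hx⟩ w hw, hK (π u) hπu w hw]
      ring
    have he1 : B e (d + K d) = 0 := by
      rw [he_def, hsub₁, hprop d hdmem, key d hdmem]
      ring
    have he2 : B e (e - (d + K d)) = 0 := by
      apply heW
      rw [map_sub, hπe, map_add, hd, hK₀ d hdmem, add_zero, sub_self]
    have hee : B e e = 0 := by
      have h := hadd₂ e (d + K d) (e - (d + K d))
      rw [show (d + K d) + (e - (d + K d)) = e from by abel] at h
      rw [h, he1, he2, add_zero]
    have he0 : e = 0 := hcz e hee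
    have hd0 : d = 0 := by rw [← hπe, he0, map_zero]
    exact sub_eq_zero.mp hd0
  constructor
  · exact ⟨π u, ⟨hπu, key⟩, fun y hy => huniq y hy⟩
  · intro uc h
    have h1 := huniq uc h
    exact ⟨h1, by rw [h1]; exact hex⟩
end
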